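/- arXiv:1003.0175 — 4 statements merged into one kernel-verified Lean document; each statement's English description precedes it below -/
import Mathlib

section
/- Let G be a simple graph on the unordered pairs V = K^(2) satisfying conditions C1 and C2, and let X = G⊕C be the graph obtained by adjoining the claw C and the connecting edges. Then X is a strongly regular graph with parameters (k(k−1)/2 + k + 1, k, 0, 2); that is, X satisfies IsSRGWith (k(k−1)/2 + k + 1) k 0 2. -/
open scoped Classical

/-- The set of unordered pairs of distinct elements of `K`. -/
abbrev NPairs (K : Type) : Type := {s : Sym2 K // ¬ s.IsDiag}

/-- `P_ab`: the neighbours of `ab` in `G`. -/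
def Pset {K : Type} (G : SimpleGraph (NPairs K)) (ab : NPairs K) : Set (NPairs K) :=
  {cd | G.Adj ab cd}

/-- `Q_ab`: the pairs different from `ab` sharing exactly one element of `K` with `ab`. -/
def Qset {K : Type} (ab : NPairs K) : Set (NPairs K) :=
  {cd | cd ≠ ab ∧ ∃! a : K, a ∈ ab.val ∧ a ∈ cd.val}

/-- `R_ab`: the remaining pairs. -/
def Rset {K : Type} (G : SimpleGraph (NPairs K)) (ab : NPairs K) : Set (NPairs K) :=
  ({ab} ∪ Pset G ab ∪ Qset ab)ᶜ

/-- Condition C1: adjacent pairs share no element of `K`. -/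
def CondC1 {K : Type} (G : SimpleGraph (NPairs K)) : Prop :=
  ∀ ab cd : NPairs K, G.Adj ab cd → ∀ a : K, a ∈ ab.val → a ∉ cd.val

/-- Condition C2: for every vertex `ab` the partition `{ab} ∪ P_ab ∪ Q_ab ∪ R_ab`
is equitable with the intersection matrix `M` of the paper. -/
def CondC2 {K : Type} (k : ℕ) (G : SimpleGraph (NPairs K)) : Prop :=
  ∀ ab : NPairs K,
    (Pset G ab).ncard = k - 2 ∧
    (∀ cd ∈ Pset G ab,
      (Pset G ab ∩ G.neighborSet cd).ncard = 0 ∧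
      (Qset ab ∩ G.neighborSet cd).ncard = 2 ∧
      (Rset G ab ∩ G.neighborSet cd).ncard = k - 5) ∧
    (∀ cd ∈ Qset ab, ¬ G.Adj ab cd ∧
      (Pset G ab ∩ G.neighborSet cd).ncard = 1 ∧
      (Qset ab ∩ G.neighborSet cd).ncard = 2 ∧
      (Rset G ab ∩ G.neighborSet cd).ncard = k - 5) ∧
    (∀ cd ∈ Rset G ab, ¬ G.Adj ab cd ∧
      (Pset G ab ∩ G.neighborSet cd).ncard = 2 ∧
      (Qset ab ∩ G.neighborSet cd).ncard = 4 ∧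
      (Rset G ab ∩ G.neighborSet cd).ncard = k - 8)

/-- Edge relation for the graph `G ⊕ C`: the edges of `G`; the claw edges joining the
`Unit` vertex `*` to each `a ∈ K`; and edges joining `ab ∈ V` to the elements it contains. -/
def crossRel {K : Type} (G : SimpleGraph (NPairs K)) :
    (NPairs K ⊕ (Unit ⊕ K)) → (NPairs K ⊕ (Unit ⊕ K)) → Prop
  | Sum.inl ab, Sum.inl cd => G.Adj ab cd
  | Sum.inr (Sum.inl _), Sum.inr (Sum.inr _) => True
  | Sum.inl ab, Sum.inr (Sum.inr a) => a ∈ ab.val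
  | _, _ => False

/-- The graph `X = G ⊕ C` on `W = V ⊕ (Unit ⊕ K)`. -/
def XGraph {K : Type} (G : SimpleGraph (NPairs K)) :
    SimpleGraph (NPairs K ⊕ (Unit ⊕ K)) :=
  SimpleGraph.fromRel (crossRel G)

section Aux
variable {K : Type} (G : SimpleGraph (NPairs K))

lemma xadj_ll {ab cd : NPairs K} :
    (XGraph G).Adj (Sum.inl ab) (Sum.inl cd) ↔ G.Adj ab cd := by
  constructor
  · rintro ⟨-, h | h⟩
    · exact h
    · exact h.symm
  · exact fun h => ⟨by simp [h.ne], Or.inl h⟩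

lemma xadj_lu {ab : NPairs K} {u : Unit} :
    ¬ (XGraph G).Adj (Sum.inl ab) (Sum.inr (Sum.inl u)) := by
  rintro ⟨-, h | h⟩ <;> exact h

lemma xadj_lk {ab : NPairs K} {a : K} :
    (XGraph G).Adj (Sum.inl ab) (Sum.inr (Sum.inr a)) ↔ a ∈ ab.val := by
  constructor
  · rintro ⟨-, h | h⟩
    · exact h
    · exact h.elim
  · exact fun h => ⟨by simp, Or.inl h⟩

lemma xadj_uk {u : Unit} {a : K} :
    (XGraph G).Adj (Sum.inr (Sum.inl u)) (Sum.inr (Sum.inr a)) :=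
  ⟨by simp, Or.inl trivial⟩

lemma xadj_uu {u u' : Unit} :
    ¬ (XGraph G).Adj (Sum.inr (Sum.inl u)) (Sum.inr (Sum.inl u')) := by
  rintro ⟨-, h | h⟩ <;> exact h

lemma xadj_kk {a b : K} :
    ¬ (XGraph G).Adj (Sum.inr (Sum.inr a)) (Sum.inr (Sum.inr b)) := by
  rintro ⟨-, h | h⟩ <;> exact h

end Aux

section Aux2
variable {K : Type} (G : SimpleGraph (NPairs K))

lemma nbhd_inl (ab : NPairs K) :
    (XGraph G).neighborSet (Sum.inl ab) =
      Sum.inl '' (Pset G ab) ∪ (fun a => Sum.inr (Sum.inr a)) '' {a : K | a ∈ ab.val} := by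
  ext w
  rcases w with cd | u | a
  · simp [SimpleGraph.mem_neighborSet, xadj_ll, Pset]
  · simp [SimpleGraph.mem_neighborSet, xadj_lu]
  · simp [SimpleGraph.mem_neighborSet, xadj_lk]

lemma nbhd_u (u : Unit) :
    (XGraph G).neighborSet (Sum.inr (Sum.inl u)) =
      (fun a => Sum.inr (Sum.inr a)) '' (Set.univ : Set K) := by
  ext w
  rcases w with cd | u' | a
  · simpa [SimpleGraph.mem_neighborSet] using fun h => xadj_lu G ((XGraph G).adj_comm _ _ |>.mp h)
  · simp [SimpleGraph.mem_neighborSet]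
  · simpa [SimpleGraph.mem_neighborSet] using xadj_uk G

lemma nbhd_k (a : K) :
    (XGraph G).neighborSet (Sum.inr (Sum.inr a)) =
      {Sum.inr (Sum.inl ())} ∪ Sum.inl '' {cd : NPairs K | a ∈ cd.val} := by
  ext w
  rcases w with cd | u | b
  · simp [SimpleGraph.mem_neighborSet, (XGraph G).adj_comm, xadj_lk]
  · cases u
    simp [SimpleGraph.mem_neighborSet]
    rw [(XGraph G).adj_comm]
    simpa using xadj_uk G
  · simp [SimpleGraph.mem_neighborSet]
    exact fun h => xadj_kk G h
end Aux2

section Aux3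
variable {K : Type} [Fintype K]

lemma card_coe {W : Type} (s : Set W) [Fintype s] : Fintype.card s = s.ncard := by
  rw [← Nat.card_eq_fintype_card, Nat.card_coe_set_eq]

lemma npair_rep (ab : NPairs K) : ∃ x y : K, x ≠ y ∧ ab.val = s(x, y) := by
  rcases ab with ⟨s, hs⟩
  induction s using Sym2.ind with
  | _ x y => exact ⟨x, y, fun h => hs (by simp [h]), rfl⟩

lemma ncard_mem_pair (ab : NPairs K) : {a : K | a ∈ ab.val}.ncard = 2 := by
  obtain ⟨x, y, hxy, hv⟩ := npair_rep ab
  have : {a : K | a ∈ ab.val} = {x, y} := by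
    ext a; simp [hv, Sym2.mem_iff]
  rw [this, Set.ncard_pair hxy]

lemma injective_inrinr : Function.Injective (fun a : K => (Sum.inr (Sum.inr a) : NPairs K ⊕ (Unit ⊕ K))) := by
  intro a b h; simpa using h

lemma ncard_pairs_containing (a : K) :
    {cd : NPairs K | a ∈ cd.val}.ncard = Fintype.card K - 1 := by
  classical
  have himg : Subtype.val '' {cd : NPairs K | a ∈ cd.val}
      = (fun y => s(a, y)) '' {y : K | y ≠ a} := by
    ext s
    constructor
    · rintro ⟨⟨s, hs⟩, hmem, rfl⟩
      obtain ⟨y, rfl⟩ := Sym2.mem_iff_exists.mp hmem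
      exact ⟨y, fun h => hs (by simp [h]), rfl⟩
    · rintro ⟨y, hy, rfl⟩
      exact ⟨⟨s(a, y), by simp [Ne.symm hy]⟩, by simp, rfl⟩
  have hinj : Set.InjOn (fun y => s(a, y)) {y : K | y ≠ a} := by
    intro y hy z hz h
    simp only [Sym2.eq_iff] at h
    rcases h with ⟨-, rfl⟩ | ⟨h1, h2⟩
    · rfl
    · exact absurd h1.symm hz
  have h1 : {cd : NPairs K | a ∈ cd.val}.ncard
      = ((fun y => s(a, y)) '' {y : K | y ≠ a}).ncard := by
    rw [← himg, Set.ncard_image_of_injective _ Subtype.val_injective]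
  rw [h1, Set.ncard_image_of_injOn hinj]
  have huniv : (Set.univ : Set K) = insert a {y : K | y ≠ a} := by
    ext y; by_cases h : y = a <;> simp [h]
  have := Set.ncard_univ K
  rw [huniv, Set.ncard_insert_of_notMem (by simp)] at this
  rw [Nat.card_eq_fintype_card] at this
  omega

lemma pairs_containing_two {a b : K} (hab : a ≠ b) :
    {cd : NPairs K | a ∈ cd.val ∧ b ∈ cd.val} = {⟨s(a, b), by simp [hab]⟩} := by
  ext cd
  simp only [Set.mem_setOf_eq, Set.mem_singleton_iff]
  rw [Sym2.mem_and_mem_iff hab, Subtype.ext_iff]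

end Aux3

section Aux4
variable {K : Type} [Fintype K] (G : SimpleGraph (NPairs K))

lemma common_ll (ab cd : NPairs K) :
    (XGraph G).commonNeighbors (Sum.inl ab) (Sum.inl cd) =
      Sum.inl '' (Pset G ab ∩ G.neighborSet cd) ∪
        (fun a => Sum.inr (Sum.inr a)) '' {x : K | x ∈ ab.val ∧ x ∈ cd.val} := by
  ext w
  rcases w with e | u | x
  · simp [SimpleGraph.mem_commonNeighbors, xadj_ll, Pset, SimpleGraph.mem_neighborSet]
  · simp [SimpleGraph.mem_commonNeighbors, xadj_lu]
  · simp [SimpleGraph.mem_commonNeighbors, xadj_lk]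

lemma common_lk (ab : NPairs K) (a : K) :
    (XGraph G).commonNeighbors (Sum.inl ab) (Sum.inr (Sum.inr a)) =
      Sum.inl '' (Pset G ab ∩ {cd : NPairs K | a ∈ cd.val}) := by
  ext w
  rcases w with e | u | b
  · simp only [SimpleGraph.mem_commonNeighbors]
    rw [(XGraph G).adj_comm (Sum.inr (Sum.inr a))]
    simp [xadj_ll, xadj_lk, Pset]
  · simp [SimpleGraph.mem_commonNeighbors, xadj_lu]
  · simp only [SimpleGraph.mem_commonNeighbors]
    simpa using fun _ h => xadj_kk G h
 
lemma common_ul (u : Unit) (ab : NPairs K) :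
    (XGraph G).commonNeighbors (Sum.inr (Sum.inl u)) (Sum.inl ab) =
      (fun a => Sum.inr (Sum.inr a)) '' {x : K | x ∈ ab.val} := by
  rw [SimpleGraph.commonNeighbors, nbhd_u, nbhd_inl]
  ext w
  rcases w with e | u' | x <;> simp

lemma common_uk (u : Unit) (a : K) :
    (XGraph G).commonNeighbors (Sum.inr (Sum.inl u)) (Sum.inr (Sum.inr a)) = ∅ := by
  rw [SimpleGraph.commonNeighbors, nbhd_u, nbhd_k]
  ext w
  rcases w with e | u' | x <;> simp

lemma common_kk (a b : K) :
    (XGraph G).commonNeighbors (Sum.inr (Sum.inr a)) (Sum.inr (Sum.inr b)) =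
      {Sum.inr (Sum.inl ())} ∪
        Sum.inl '' {cd : NPairs K | a ∈ cd.val ∧ b ∈ cd.val} := by
  rw [SimpleGraph.commonNeighbors, nbhd_k, nbhd_k]
  ext w
  rcases w with e | u' | x <;> simp [and_comm]

lemma key_count {k : ℕ} (hC1 : CondC1 G) (hC2 : CondC2 k G) (ab : NPairs K) {x : K}
    (hx : x ∉ ab.val) :
    (Pset G ab ∩ {cd : NPairs K | x ∈ cd.val}).ncard = 2 := by
  obtain ⟨p, q, hpq, hv⟩ := npair_rep ab
  have hp : p ∈ ab.val := by rw [hv]; simp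
  have hxp : x ≠ p := fun h => hx (h ▸ hp)
  obtain ⟨v, hvval⟩ : ∃ v : NPairs K, v.val = s(x, p) := ⟨⟨_, by simp [hxp]⟩, rfl⟩
  have hxv : x ∈ v.val := by rw [hvval]; simp
  have hpv : p ∈ v.val := by rw [hvval]; simp
  have hab_v : ab ∈ Qset v := by
    refine ⟨fun h => hx (h ▸ hxv), p, ⟨hpv, hp⟩, ?_⟩
    rintro y ⟨hy1, hy2⟩
    rw [hvval] at hy1
    rcases Sym2.mem_iff.mp hy1 with rfl | hyp
    · exact absurd hy2 hx
    · exact hyp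
  have h2 := ((hC2 v).2.2.1 ab hab_v).2.2.1
  rw [← h2]
  congr 1
  ext cd
  simp only [Set.mem_inter_iff, Set.mem_setOf_eq, Pset, SimpleGraph.mem_neighborSet, Qset]
  constructor
  · rintro ⟨hadj, hxcd⟩
    refine ⟨⟨fun h => hC1 ab cd hadj p hp (h ▸ hpv), x, ⟨hxv, hxcd⟩, ?_⟩, hadj⟩
    rintro y ⟨hy1, hy2⟩
    rw [hvval] at hy1
    rcases Sym2.mem_iff.mp hy1 with rfl | hyp
    · rfl
    · exact absurd (hyp ▸ hy2) (hC1 ab cd hadj p hp)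
  · rintro ⟨⟨hne, y, ⟨hy1, hy2⟩, -⟩, hadj⟩
    refine ⟨hadj, ?_⟩
    rw [hvval] at hy1
    rcases Sym2.mem_iff.mp hy1 with rfl | hyp
    · exact hy2
    · exact absurd (hyp ▸ hy2) (hC1 ab cd hadj p hp)

end Aux4

section Aux5
variable {K : Type} [Fintype K]

lemma ncard_union_images (s : Set (NPairs K)) (t : Set K) :
    (Sum.inl '' s ∪ (fun a => Sum.inr (Sum.inr a)) '' t
      : Set (NPairs K ⊕ (Unit ⊕ K))).ncard = s.ncard + t.ncard := by
  rw [Set.ncard_union_eq ?_ (Set.toFinite _) (Set.toFinite _),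
    Set.ncard_image_of_injective _ Sum.inl_injective,
    Set.ncard_image_of_injective _ injective_inrinr]
  rw [Set.disjoint_left]
  rintro _ ⟨x, -, rfl⟩ ⟨y, -, h⟩
  simp at h

end Aux5

theorem stmt_0_aux (k : ℕ) (hk : 10 ≤ k) (K : Type) [Fintype K] (hK : Fintype.card K = k)
    (G : SimpleGraph (NPairs K)) (hC1 : CondC1 G) (hC2 : CondC2 k G) :
    (XGraph G).IsSRGWith (k * (k - 1) / 2 + k + 1) k 0 2 := by
  classical
  have hshared_R : ∀ ab cd : NPairs K, ab ≠ cd → cd ∉ Qset ab →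
      {x : K | x ∈ ab.val ∧ x ∈ cd.val} = ∅ := by
    intro ab cd hne hQ
    ext x
    simp only [Set.mem_setOf_eq, Set.mem_empty_iff_false, iff_false, not_and]
    intro hx1 hx2
    apply hQ
    refine ⟨fun h => hne h.symm, x, ⟨hx1, hx2⟩, ?_⟩
    rintro y ⟨hy1, hy2⟩
    by_contra hyx
    exact hne (Subtype.ext (Sym2.eq_of_ne_mem hyx hy1 hx1 hy2 hx2))
  constructor
  · -- card
    simp only [Fintype.card_sum, Sym2.card_subtype_not_diag, hK, Nat.choose_two_right,
      Fintype.card_unit]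
    omega
  · -- regular
    intro v
    rw [← SimpleGraph.card_neighborSet_eq_degree, card_coe]
    rcases v with ab | u | a
    · rw [nbhd_inl, ncard_union_images, (hC2 ab).1, ncard_mem_pair]
      omega
    · rw [nbhd_u, Set.ncard_image_of_injective _ injective_inrinr, Set.ncard_univ,
        Nat.card_eq_fintype_card, hK]
    · rw [nbhd_k, Set.ncard_union_eq ?_ (Set.toFinite _) (Set.toFinite _),
        Set.ncard_singleton, Set.ncard_image_of_injective _ Sum.inl_injective,
        ncard_pairs_containing, hK]
      · omega
      · rw [Set.disjoint_left]
        rintro _ rfl ⟨y, -, h⟩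
        simp at h
  · -- of_adj : common neighbours of adjacent vertices, ℓ = 0
    intro v w hadj
    rw [card_coe]
    rcases v with ab | u | a <;> rcases w with cd | u' | a'
    · have hG : G.Adj ab cd := (xadj_ll G).mp hadj
      have h0 : Pset G ab ∩ G.neighborSet cd = ∅ :=
        (Set.ncard_eq_zero (Set.toFinite _)).mp ((hC2 ab).2.1 cd hG).1
      have h1 : {x : K | x ∈ ab.val ∧ x ∈ cd.val} = ∅ := by
        ext x
        simp only [Set.mem_setOf_eq, Set.mem_empty_iff_false, iff_false, not_and]
        exact fun h1 h2 => hC1 ab cd hG x h1 h2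
      rw [common_ll, h0, h1]
      simp
    · exact absurd hadj (xadj_lu G)
    · have ha : a' ∈ ab.val := (xadj_lk G).mp hadj
      have h1 : Pset G ab ∩ {cd : NPairs K | a' ∈ cd.val} = ∅ := by
        ext cd
        simp only [Set.mem_inter_iff, Set.mem_setOf_eq, Set.mem_empty_iff_false, iff_false,
          not_and, Pset]
        exact fun hG => hC1 ab cd hG a' ha
      rw [common_lk, h1]
      simp
    · exact absurd hadj.symm (xadj_lu G)
    · exact absurd hadj (xadj_uu G)
    · rw [common_uk]
      simp
    · have ha : a ∈ cd.val := (xadj_lk G).mp hadj.symm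
      have h1 : Pset G cd ∩ {e : NPairs K | a ∈ e.val} = ∅ := by
        ext e
        simp only [Set.mem_inter_iff, Set.mem_setOf_eq, Set.mem_empty_iff_false, iff_false,
          not_and, Pset]
        exact fun hG => hC1 cd e hG a ha
      rw [SimpleGraph.commonNeighbors_symm, common_lk, h1]
      simp
    · rw [SimpleGraph.commonNeighbors_symm, common_uk]
      simp
    · exact absurd hadj (xadj_kk G)
  · -- of_not_adj : common neighbours of distinct nonadjacent vertices, μ = 2
    intro v w hne hnadj
    rw [card_coe]
    rcases v with ab | u | a <;> rcases w with cd | u' | a'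
    · -- two pair vertices
      have hne' : ab ≠ cd := fun h => hne (h ▸ rfl)
      have hnG : ¬ G.Adj ab cd := fun h => hnadj ((xadj_ll G).mpr h)
      rw [common_ll, ncard_union_images]
      by_cases hQ : cd ∈ Qset ab
      · have h1 := ((hC2 ab).2.2.1 cd hQ).2.1
        obtain ⟨-, x0, hx0, huniq⟩ := hQ
        have h2 : {x : K | x ∈ ab.val ∧ x ∈ cd.val} = {x0} := by
          ext x
          exact ⟨fun h => huniq x h, fun h => h ▸ hx0⟩
        rw [h1, h2, Set.ncard_singleton]
      · have hR : cd ∈ Rset G ab := by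
          simp only [Rset, Set.mem_compl_iff, Set.mem_union, Set.mem_singleton_iff, not_or]
          exact ⟨⟨hne'.symm, hnG⟩, hQ⟩
        have h1 := ((hC2 ab).2.2.2 cd hR).2.1
        rw [h1, hshared_R ab cd hne' hQ, Set.ncard_empty]
    · -- pair and star
      rw [SimpleGraph.commonNeighbors_symm, common_ul,
        Set.ncard_image_of_injective _ injective_inrinr, ncard_mem_pair]
    · -- pair and element
      have ha : a' ∉ ab.val := fun h => hnadj ((xadj_lk G).mpr h)
      rw [common_lk, Set.ncard_image_of_injective _ Sum.inl_injective,
        key_count G hC1 hC2 ab ha]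
    · -- star and pair
      rw [common_ul, Set.ncard_image_of_injective _ injective_inrinr, ncard_mem_pair]
    · -- star and star
      cases u; cases u'
      exact absurd rfl hne
    · -- star and element: adjacent, contradiction
      exact absurd (xadj_uk G) hnadj
    · -- element and pair
      have ha : a ∉ cd.val := fun h => hnadj (((xadj_lk G).mpr h).symm)
      rw [SimpleGraph.commonNeighbors_symm, common_lk,
        Set.ncard_image_of_injective _ Sum.inl_injective, key_count G hC1 hC2 cd ha]
    · -- element and star
      exact absurd (xadj_uk G).symm hnadj
    · -- two elements
      have hab : a ≠ a' := fun h => hne (h ▸ rfl)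
      rw [common_kk, pairs_containing_two hab, Set.image_singleton, Set.singleton_union,
        Set.ncard_insert_of_notMem (by simp), Set.ncard_singleton]


theorem stmt_0 (k : ℕ) (hk : 10 ≤ k) (K : Type) [Fintype K] (hK : Fintype.card K = k)
    (G : SimpleGraph (NPairs K)) (hC1 : CondC1 G) (hC2 : CondC2 k G) :
    (XGraph G).IsSRGWith (k * (k - 1) / 2 + k + 1) k 0 2 := by
  exact stmt_0_aux k hk K hK G hC1 hC2
end

section
/- Let G be a simple graph on the unordered pairs V = K^(2) satisfying conditions C1 and C2, and let X = G⊕C be the graph obtained by adjoining the claw C and the connecting edges. Then X is triangle-free (X.CliqueFree 3). -/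
open scoped Classical

theorem stmt_1 (k : ℕ) (hk : 10 ≤ k) (K : Type) [Fintype K] (hK : Fintype.card K = k)
    (G : SimpleGraph (NPairs K)) (hC1 : CondC1 G) (hC2 : CondC2 k G) :
    (XGraph G).CliqueFree 3 := by

  classical
  -- G itself is triangle-free, by C2
  have hG : ∀ x y z : NPairs K, G.Adj x y → G.Adj x z → G.Adj y z → False := by
    intro x y z hxy hxz hyz
    have h := ((hC2 x).2.1 y hxy).1
    have hz : z ∈ Pset G x ∩ G.neighborSet y := ⟨hxz, hyz⟩
    have hfin : (Pset G x ∩ G.neighborSet y).Finite := Set.toFinite _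
    rw [Set.ncard_eq_zero hfin] at h
    simp [h] at hz
  intro t ht
  rw [SimpleGraph.is3Clique_iff] at ht
  obtain ⟨x, y, z, hxy, hxz, hyz, rfl⟩ := ht
  -- adjacency characterization
  have hadj : ∀ u v, (XGraph G).Adj u v → crossRel G u v ∨ crossRel G v u := by
    intro u v huv
    exact huv.2
  have hGadj : ∀ (a b : NPairs K), (XGraph G).Adj (Sum.inl a) (Sum.inl b) → G.Adj a b := by
    intro a b h
    rcases hadj _ _ h with h' | h'
    · exact h'
    · exact h'.symm
  -- two vertices of V and one element of K case
  have hVK : ∀ (a b : NPairs K) (c : K), (XGraph G).Adj (Sum.inl a) (Sum.inl b) →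
      (XGraph G).Adj (Sum.inl a) (Sum.inr (Sum.inr c)) →
      (XGraph G).Adj (Sum.inl b) (Sum.inr (Sum.inr c)) → False := by
    intro a b c hab hac hbc
    have hab' := hGadj a b hab
    have hac' : c ∈ a.val := by
      rcases hadj _ _ hac with h' | h'
      · exact h'
      · exact h'.elim
    have hbc' : c ∈ b.val := by
      rcases hadj _ _ hbc with h' | h'
      · exact h'
      · exact h'.elim
    exact hC1 a b hab' c hac' hbc'
  rcases x with ab | u | a <;> rcases y with cd | v | b <;> rcases z with ef | w | c
  all_goals first
    | (exact (hadj _ _ hxy).elim (fun h => h) (fun h => h))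
    | (exact (hadj _ _ hxz).elim (fun h => h) (fun h => h))
    | (exact (hadj _ _ hyz).elim (fun h => h) (fun h => h))
    | exact hG ab cd ef (hGadj _ _ hxy) (hGadj _ _ hxz) (hGadj _ _ hyz)
    | exact hVK ab cd c hxy hxz hyz
    | exact hVK ab ef b hxz hxy hyz.symm
    | exact hVK cd ef a hyz hxy.symm hxz.symm
end

section
/- Let F be a field and let u, x ∈ F with x ≠ 0, x ≠ 1, u ≠ 0 and u ≠ 1. Then the cross-ratio adjacency condition between the pairs {u,1} and {ux,x}, namely ((ux−u)(x−1) = u·(ux−1)(x−u)) ∨ (u·(ux−u)(x−1) = (ux−1)(x−u)), holds if and only if u = x + x⁻¹ − 1 or u·(x + x⁻¹ − 1) = 1. -/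
theorem stmt_6 (F : Type) [Field F] (u x : F)
    (hx0 : x ≠ 0) (hx1 : x ≠ 1) (hu0 : u ≠ 0) (hu1 : u ≠ 1) :
    ((u * x - u) * (x - 1) = u * ((u * x - 1) * (x - u)) ∨
      u * ((u * x - u) * (x - 1)) = (u * x - 1) * (x - u)) ↔
    (u = x + x⁻¹ - 1 ∨ u * (x + x⁻¹ - 1) = 1) := by
  have hu1' : u - 1 ≠ 0 := sub_ne_zero.mpr hu1
  have e1 : ((u * x - u) * (x - 1) = u * ((u * x - 1) * (x - u))) ↔
      u = x + x⁻¹ - 1 := by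
    rw [← sub_eq_zero (b := u * ((u * x - 1) * (x - u)))]
    have h : (u * x - u) * (x - 1) - u * ((u * x - 1) * (x - u))
        = u * ((u - 1) * (u * x - (x ^ 2 - x + 1))) := by ring
    rw [h, mul_eq_zero, mul_eq_zero]
    have h2 : u = x + x⁻¹ - 1 ↔ u * x - (x ^ 2 - x + 1) = 0 := by
      rw [sub_eq_zero]
      field_simp
      constructor <;> intro h3 <;> linear_combination h3
    rw [h2]
    constructor
    · rintro (h | (h | h))
      · exact absurd h hu0
      · exact absurd h hu1'
      · exact h
    · exact fun h => Or.inr (Or.inr h)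
  have e2 : (u * ((u * x - u) * (x - 1)) = (u * x - 1) * (x - u)) ↔
      u * (x + x⁻¹ - 1) = 1 := by
    rw [← sub_eq_zero (b := (u * x - 1) * (x - u))]
    have h : u * ((u * x - u) * (x - 1)) - (u * x - 1) * (x - u)
        = (u - 1) * (u * (x ^ 2 - x + 1) - x) := by ring
    rw [h, mul_eq_zero]
    have h2 : u * (x + x⁻¹ - 1) = 1 ↔ u * (x ^ 2 - x + 1) - x = 0 := by
      rw [sub_eq_zero]
      field_simp
      constructor <;> intro h3 <;> linear_combination h3
    rw [h2]
    constructor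
    · rintro (h | h)
      · exact absurd h hu1'
      · exact h
    · exact Or.inr
  rw [e1, e2]
end

section
/- Let q be an odd natural number with q > 1 and let F be a finite field with |F| = q². Suppose there exists ζ ∈ F with ζ² = 3. Then there exists an admissible u ∈ F, i.e. an element u with u ≠ 0, u ≠ 1, u ≠ −1, such that for every x ∈ F with x ≠ 0 and x ≠ 1 one has u ≠ x + x⁻¹ − 1 and u·(x + x⁻¹ − 1) ≠ 1. -/
open Polynomial

theorem stmt_7 (q : ℕ) (hq : Odd q) (hq1 : 1 < q) (F : Type) [Field F] [Fintype F]
    (hF : Fintype.card F = q ^ 2) (ζ : F) (hζ : ζ ^ 2 = 3) :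
    ∃ u : F, u ≠ 0 ∧ u ≠ 1 ∧ u ≠ -1 ∧
      ∀ x : F, x ≠ 0 → x ≠ 1 → u ≠ x + x⁻¹ - 1 ∧ u * (x + x⁻¹ - 1) ≠ 1 := by
  clear ζ hζ
  classical
  obtain ⟨k, hk⟩ := hq
  have hk1 : 1 ≤ k := by omega
  have hq0 : q ≠ 0 := by omega
  -- characteristic
  set p := ringChar F with hpdef
  haveI hp' : Fact p.Prime := ⟨CharP.char_is_prime F p⟩
  obtain ⟨n, hpp, hcard⟩ := FiniteField.card F p
  obtain ⟨m, hm⟩ : ∃ m : ℕ, q = p ^ m := by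
    have hdvd : q ∣ p ^ (n : ℕ) := by
      rw [← hcard, hF]; exact dvd_pow_self q (by norm_num)
    obtain ⟨m, _, hm⟩ := (Nat.dvd_prime_pow hpp).mp hdvd
    exact ⟨m, hm⟩
  have hqhom : ∀ a b : F, (a + b) ^ q = a ^ q + b ^ q := by
    intro a b; rw [hm]; exact add_pow_char_pow a b p m
  have hp2 : p ≠ 2 := by
    intro h
    have hm1 : m ≠ 0 := by rintro rfl; simp at hm; omega
    have hdq : p ∣ q := hm ▸ dvd_pow_self p hm1
    rw [h] at hdq; omega
  have two_ne : (2 : F) ≠ 0 := by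
    intro h
    have h2 : ((2 : ℕ) : F) = 0 := by exact_mod_cast h
    have hd := (CharP.cast_eq_zero_iff F p 2).mp h2
    exact hp2 ((Nat.prime_dvd_prime_iff_eq hpp Nat.prime_two).mp hd)
  have one_ne_neg : (1 : F) ≠ -1 := by
    intro h; apply two_ne; linear_combination h
  -- odd powers of q-fixed elements
  have hsubq : ∀ a b : F, (a - b) ^ q = a ^ q - b ^ q := by
    intro a b
    have hneg : (-b) ^ q = -(b ^ q) := Odd.neg_pow ⟨k, hk⟩ b
    have := hqhom a (-b)
    rw [hneg] at this
    simpa [sub_eq_add_neg] using this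
  have h2q : (2 : F) ^ q = 2 := by
    have := hqhom 1 1
    norm_num at this
    simpa using this
  have hpow1 : ∀ c : F, c ≠ 0 → c ^ q = c → c ^ (2 * k) = 1 := by
    intro c hc hcq
    have h1 : c ^ (2 * k) * c = 1 * c := by
      rw [← pow_succ, ← hk, hcq, one_mul]
    exact mul_right_cancel₀ hc h1
  -- generator and basic elements
  obtain ⟨g, hg⟩ := IsCyclic.exists_generator (α := Fˣ)
  have hq2 : q ^ 2 = 4 * k ^ 2 + 4 * k + 1 := by rw [hk]; ring
  have hcardu : Fintype.card Fˣ = 4 * k ^ 2 + 4 * k := by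
    rw [Fintype.card_units, hF]; omega
  have horder : orderOf g = 4 * k ^ 2 + 4 * k := by
    rw [orderOf_eq_card_of_forall_mem_zpowers hg, Nat.card_eq_fintype_card, hcardu]
  have hT2 : (g ^ (2 * k ^ 2 + 2 * k)) ^ 2 = 1 := by
    rw [← pow_mul]
    have he : (2 * k ^ 2 + 2 * k) * 2 = 4 * k ^ 2 + 4 * k := by ring
    rw [he, ← horder, pow_orderOf_eq_one]
  have hTne : g ^ (2 * k ^ 2 + 2 * k) ≠ 1 := by
    intro h
    have hd := orderOf_dvd_of_pow_eq_one h
    rw [horder] at hd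
    have := Nat.le_of_dvd (by positivity) hd
    nlinarith
  set G : F := (g : F) with hGdef
  have hGne : G ≠ 0 := Units.ne_zero g
  have hg2 : G ^ (2 * k ^ 2 + 2 * k) = -1 := by
    have h2 : (G ^ (2 * k ^ 2 + 2 * k)) ^ 2 = 1 := by
      have := congrArg (Units.val) hT2
      push_cast at this
      exact_mod_cast this
    have h3 : (G ^ (2 * k ^ 2 + 2 * k) - 1) * (G ^ (2 * k ^ 2 + 2 * k) + 1) = 0 := by
      linear_combination h2
    rcases mul_eq_zero.mp h3 with h4 | h4
    · exfalso
      apply hTne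
      apply Units.ext
      push_cast
      have : G ^ (2 * k ^ 2 + 2 * k) = 1 := by linear_combination h4
      exact this
    · linear_combination h4
  have hGord : G ^ (4 * k ^ 2 + 4 * k) = 1 := by
    have := congrArg (Units.val) (pow_orderOf_eq_one g)
    rw [horder] at this
    push_cast at this
    exact_mod_cast this
  set d : F := G ^ (2 * k + 2) with hddef
  set e : F := G ^ (k + 1) with hedef
  have hd_e : e ^ 2 = d := by
    rw [hedef, hddef, ← pow_mul]
    congr 1
    ring
  have hdne : d ≠ 0 := pow_ne_zero _ hGne
  have hene : e ≠ 0 := pow_ne_zero _ hGne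
  have hdk : d ^ k = -1 := by
    rw [hddef, ← pow_mul]
    have : (2 * k + 2) * k = 2 * k ^ 2 + 2 * k := by ring
    rw [this, hg2]
  have hd2k : d ^ (2 * k) = 1 := by
    rw [hddef, ← pow_mul]
    have : (2 * k + 2) * (2 * k) = 4 * k ^ 2 + 4 * k := by ring
    rw [this, hGord]
  have hdq : d ^ q = d := by
    rw [hk, pow_succ, hd2k, one_mul]
  have heq : e ^ q = -e := by
    rw [hk, pow_succ, hedef, ← pow_mul]
    have : (k + 1) * (2 * k) = 2 * k ^ 2 + 2 * k := by ring
    rw [this, hg2, neg_one_mul]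
  -- the subfield of q-fixed elements
  let K : Subfield F :=
    { carrier := {x : F | x ^ q = x}
      zero_mem' := by simp [zero_pow hq0]
      one_mem' := by simp
      add_mem' := by
        intro a b ha hb
        simp only [Set.mem_setOf_eq] at *
        rw [hqhom, ha, hb]
      mul_mem' := by
        intro a b ha hb
        simp only [Set.mem_setOf_eq] at *
        rw [mul_pow, ha, hb]
      neg_mem' := by
        intro a ha
        simp only [Set.mem_setOf_eq] at *
        rw [Odd.neg_pow ⟨k, hk⟩, ha]
      inv_mem' := by
        intro a ha
        simp only [Set.mem_setOf_eq] at *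
        rw [inv_pow, ha] }
  haveI : Fintype K := Fintype.ofFinite K
  haveI hKchar : CharP K p := RingHom.charP K.subtype (Subtype.val_injective) p
  have hKodd : Fintype.card K % 2 = 1 := by
    obtain ⟨nK, hKp, hKcard⟩ := FiniteField.card K p
    rw [hKcard]
    obtain ⟨t, ht⟩ : Odd (p ^ (nK : ℕ)) := Odd.pow (Nat.Prime.odd_of_ne_two hpp hp2)
    omega
  -- d is a sum of two squares of q-fixed elements
  have hdK : d ∈ K := hdq
  obtain ⟨a, b, hab⟩ : ∃ a b : K, a ^ 2 + b ^ 2 = (⟨d, hdK⟩ : K) := by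
    obtain ⟨a, b, hab⟩ :=
      FiniteField.exists_root_sum_quadratic (f := (X ^ 2 : K[X]))
        (g := (X ^ 2 - C (⟨d, hdK⟩ : K) : K[X])) (degree_X_pow 2)
        (degree_X_pow_sub_C (by norm_num) _) hKodd
    refine ⟨a, b, ?_⟩
    simp only [eval_pow, eval_X, eval_sub, eval_C] at hab
    linear_combination hab
  set α : F := (a : F) with hαdef
  set β : F := (b : F) with hβdef
  have hαq : α ^ q = α := a.2
  have hβq : β ^ q = β := b.2
  have hαβ : α ^ 2 + β ^ 2 = d := by
    have := congrArg (Subtype.val) hab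
    push_cast at this
    exact this
  have hαne : α ≠ 0 := by
    intro h
    rw [h] at hαβ
    have hb0 : β ≠ 0 := by
      intro h2; rw [h2] at hαβ; simp at hαβ; exact hdne hαβ.symm
    have : d ^ k = 1 := by
      rw [← hαβ]
      have : ((0 : F) ^ 2 + β ^ 2) ^ k = β ^ (2 * k) := by
        have h0 : (0 : F) ^ 2 + β ^ 2 = β ^ 2 := by ring
        rw [h0, ← pow_mul]
      rw [this, hpow1 β hb0 hβq]
    rw [hdk] at this
    exact one_ne_neg this.symm
  have hβne : β ≠ 0 := by
    intro h
    rw [h] at hαβ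
    have : d ^ k = 1 := by
      rw [← hαβ]
      have : (α ^ 2 + (0 : F) ^ 2) ^ k = α ^ (2 * k) := by
        have h0 : α ^ 2 + (0 : F) ^ 2 = α ^ 2 := by ring
        rw [h0, ← pow_mul]
      rw [this, hpow1 α hαne hαq]
    rw [hdk] at this
    exact one_ne_neg this.symm
  have hβ2k : β ^ (2 * k) = 1 := hpow1 β hβne hβq
  set y : F := α / 2 with hydef
  have hy0 : y ≠ 0 := div_ne_zero hαne two_ne
  have hyq : y ^ q = y := by
    rw [hydef, div_pow, hαq, h2q]
  have h2y : 2 * y = α := by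
    rw [hydef]; field_simp
  -- the two key quantities are non-squares
  have hNq : (2 * y * e - d) ^ q = -(2 * y * e) - d := by
    rw [hsubq, hdq, mul_pow, mul_pow, h2q, hyq, heq]
    ring
  have hMq : (-(2 * y * e) - d) ^ q = 2 * y * e - d := by
    rw [hsubq, hdq]
    have : (-(2 * y * e)) ^ q = -((2 * y * e) ^ q) := Odd.neg_pow ⟨k, hk⟩ _
    rw [this, mul_pow, mul_pow, h2q, hyq, heq]
    ring
  have hNM : (-(2 * y * e) - d) * (2 * y * e - d) = d * β ^ 2 := by
    have h1 : β ^ 2 = d - α ^ 2 := by linear_combination hαβ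
    linear_combination (-(4 * y ^ 2)) * hd_e - d * h1 - (d * α + 2 * d * y) * h2y
  have hNne : 2 * y * e - d ≠ 0 := by
    intro h
    have h2 : (2 * y * e - d) ^ q = 0 := by rw [h, zero_pow hq0]
    rw [hNq] at h2
    apply hdne
    have : (2 : F) * d = 0 := by linear_combination -h - h2
    rcases mul_eq_zero.mp this with h3 | h3
    · exact absurd h3 two_ne
    · exact h3
  have hMne : -(2 * y * e) - d ≠ 0 := by
    intro h
    have h2 : (-(2 * y * e) - d) ^ q = 0 := by rw [h, zero_pow hq0]
    rw [hMq] at h2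
    apply hdne
    have : (2 : F) * d = 0 := by linear_combination -h - h2
    rcases mul_eq_zero.mp this with h3 | h3
    · exact absurd h3 two_ne
    · exact h3
  have key : ∀ c : F, c ≠ 0 → c ^ (2 * k + 2) = d * β ^ 2 → ∀ r : F, r ^ 2 ≠ c := by
    intro c hc hcpow r hr
    have hr0 : r ≠ 0 := by
      intro h; rw [h] at hr; simp at hr; exact hc hr.symm
    have h1 : r ^ (q ^ 2 - 1) = 1 := by
      rw [← hF]; exact FiniteField.pow_card_sub_one_eq_one r hr0
    have hexp : q ^ 2 - 1 = 2 * ((2 * k + 2) * k) := by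
      have hmu : (2 * k + 2) * k = 2 * k ^ 2 + 2 * k := by ring
      omega
    rw [hexp, pow_mul, hr, pow_mul, hcpow, mul_pow, hdk, ← pow_mul, hβ2k] at h1
    simp at h1
    exact one_ne_neg h1.symm
  have hN : ∀ r : F, r ^ 2 ≠ 2 * y * e - d := by
    apply key _ hNne
    have hstep : (2 * y * e - d) ^ (2 * k + 2) =
        (2 * y * e - d) ^ q * (2 * y * e - d) := by
      have h1 : 2 * k + 2 = q + 1 := by omega
      rw [h1, pow_succ]
    rw [hstep, hNq, hNM]
  have hM : ∀ r : F, r ^ 2 ≠ -(2 * y * e) - d := by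
    apply key _ hMne
    have hstep : (-(2 * y * e) - d) ^ (2 * k + 2) =
        (-(2 * y * e) - d) ^ q * (-(2 * y * e) - d) := by
      have h1 : 2 * k + 2 = q + 1 := by omega
      rw [h1, pow_succ]
    rw [hstep, hMq]
    linear_combination hNM
  -- the admissible element
  have hyme : y - e ≠ 0 := by
    intro h
    have hye : y = e := by linear_combination h
    rw [hye] at hyq
    rw [heq] at hyq
    apply hene
    have : (2 : F) * e = 0 := by linear_combination -hyq
    rcases mul_eq_zero.mp this with h3 | h3
    · exact absurd h3 two_ne
    · exact h3
  have hype : y + e ≠ 0 := by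
    intro h
    have hye : y = -e := by linear_combination h
    have : y ^ q = e := by
      rw [hye]
      rw [Odd.neg_pow ⟨k, hk⟩, heq]
      ring
    rw [hyq, hye] at this
    apply hene
    have h2 : (2 : F) * e = 0 := by linear_combination -this
    rcases mul_eq_zero.mp h2 with h3 | h3
    · exact absurd h3 two_ne
    · exact h3
  refine ⟨(y + e) / (y - e), div_ne_zero hype hyme, ?_, ?_, ?_⟩
  · intro h
    rw [div_eq_one_iff_eq hyme] at h
    apply hene
    have h2 : (2 : F) * e = 0 := by linear_combination h
    rcases mul_eq_zero.mp h2 with h3 | h3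
    · exact absurd h3 two_ne
    · exact h3
  · intro h
    rw [div_eq_iff hyme] at h
    apply hy0
    have h2 : (2 : F) * y = 0 := by linear_combination h
    rcases mul_eq_zero.mp h2 with h3 | h3
    · exact absurd h3 two_ne
    · exact h3
  · intro x hx0 hx1
    constructor
    · intro h
      rw [div_eq_iff hyme] at h
      have hE : (x ^ 2 + 1) * (y - e) = 2 * x * y := by
        have h' := congrArg (fun t => t * x) h
        field_simp at h'
        linear_combination -h'
      apply hN ((x ^ 2 - 1) * (y - e) / (2 * x))
      have h2x : (2 : F) * x ≠ 0 := mul_ne_zero two_ne hx0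
      rw [div_pow, div_eq_iff (pow_ne_zero 2 h2x)]
      linear_combination ((x ^ 2 + 1) * (y - e) + 2 * x * y) * hE - 4 * x ^ 2 * hd_e
    · intro h
      have h' : (y + e) * (x + x⁻¹ - 1) = y - e := by
        rw [div_mul_eq_mul_div, div_eq_iff hyme] at h
        linear_combination h
      have hE : (x ^ 2 + 1) * (y + e) = 2 * x * y := by
        have h'' := congrArg (fun t => t * x) h'
        field_simp at h''
        linear_combination h''
      apply hM ((x ^ 2 - 1) * (y + e) / (2 * x))
      have h2x : (2 : F) * x ≠ 0 := mul_ne_zero two_ne hx0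
      rw [div_pow, div_eq_iff (pow_ne_zero 2 h2x)]
      linear_combination ((x ^ 2 + 1) * (y + e) + 2 * x * y) * hE - 4 * x ^ 2 * hd_e
end
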